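/- Let M be a measurable space, κ a Markov kernel on M, and ψ_1,…,ψ_N : M → ℝ bounded measurable functions; write Kψ_i(x) = ∫ ψ_i(y) dκ(x)(y) and K(ψ_i²)(x) = ∫ ψ_i(y)² dκ(x)(y). Let (Ω, P) be a probability space and Z_0, Z_1, …, Z_T : Ω → M measurable random variables such that, for each 0 ≤ k < T and each i, the conditional expectations given the σ-algebra 𝔽_k generated by (Z_0,…,Z_k) satisfy E[ψ_i(Z_{k+1}) | 𝔽_k] = (Kψ_i)(Z_k) almost surely and E[ψ_i(Z_{k+1})² | 𝔽_k] = K(ψ_i²)(Z_k) almost surely. Assume there exists γ̃ ≥ 0 with E[ψ_j(Z_k)² (K(ψ_i²)(Z_k) − (Kψ_i(Z_k))²)] ≤ γ̃ for all i, j and all 0 ≤ k < T. Define the random N×N matrices K̂_T with entries (1/T) Σ_{k=0}^{T−1} ψ_i(Z_{k+1}) ψ_j(Z_k) and K_T with entries (1/T) Σ_{k=0}^{T−1} (Kψ_i)(Z_k) ψ_j(Z_k). Then E[‖K_T − K̂_T‖_F²] ≤ N² γ̃ / T. -/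

import Mathlib

/-!
Each entry of `K_T - K̂_T` is `T⁻¹ ∑ₖ Dₖ` with `Dₖ = (Kψᵢ(Zₖ) - ψᵢ(Zₖ₊₁)) ψⱼ(Zₖ)`.
Since `E[Dₖ | 𝔽ₖ] = 0` and `Dₗ` is `𝔽ₖ`-measurable for `l < k`, the `Dₖ` are orthogonal in `L²`,
so `E[(∑ₖ Dₖ)²] = ∑ₖ E[Dₖ²]`, and the conditional variance identity gives
`E[Dₖ²] = E[ψⱼ(Zₖ)² (K(ψᵢ²) - (Kψᵢ)²)(Zₖ)] ≤ γ̃`. Each entry therefore has mean square at most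
`γ̃ / T`, and there are `N²` entries.
-/

open MeasureTheory ProbabilityTheory Matrix

noncomputable def frobeniusNormSq {m n : Type*} [Fintype m] [Fintype n]
    (A : Matrix m n ℝ) : ℝ :=
  ∑ i, ∑ j, (A i j) ^ 2

open scoped ENNReal

theorem integral_frobeniusNormSq_le {Ω m n : Type*} [MeasurableSpace Ω] [Fintype m] [Fintype n]
    {P : Measure Ω} {A : Ω → Matrix m n ℝ} {ε : ℝ} (hA : ∀ i j, MemLp (fun ω => A ω i j) 2 P)
    (hε : ∀ i j, ∫ ω, A ω i j ^ 2 ∂P ≤ ε) :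
    ∫ ω, frobeniusNormSq (A ω) ∂P ≤ Fintype.card m * Fintype.card n * ε := by
  have hA2 : ∀ i j, Integrable (fun ω => A ω i j ^ 2) P := fun i j => (hA i j).integrable_sq
  unfold frobeniusNormSq
  rw [integral_finsetSum _ fun i _ => integrable_finsetSum _ fun j _ => hA2 i j]
  calc ∑ i, ∫ ω, ∑ j, A ω i j ^ 2 ∂P = ∑ i, ∑ j, ∫ ω, A ω i j ^ 2 ∂P :=
        Finset.sum_congr rfl fun i _ => integral_finsetSum _ fun j _ => hA2 i j
    _ ≤ ∑ _i : m, ∑ _j : n, ε := by gcongr with i _ j _; exact hε i j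
    _ = Fintype.card m * Fintype.card n * ε := by simp [mul_assoc]

theorem abs_integral_le_of_forall_abs_le {α : Type*} [MeasurableSpace α] {μ : Measure α}
    [IsProbabilityMeasure μ] {f : α → ℝ} {C : ℝ} (h : ∀ x, |f x| ≤ C) :
    |∫ x, f x ∂μ| ≤ C := by
  simpa using norm_integral_le_of_norm_le_const (μ := μ) (f := f) (ae_of_all _ h)

theorem memLp_top_comp_of_bound {Ω M : Type*} [MeasurableSpace Ω] [MeasurableSpace M]
    {P : Measure Ω} {f : M → ℝ} (hf : Measurable f) (hf_bdd : ∃ C : ℝ, ∀ x, |f x| ≤ C)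
    {Y : Ω → M} (hY : Measurable Y) :
    MemLp (fun ω => f (Y ω)) ∞ P := by
  obtain ⟨C, hC⟩ := hf_bdd
  exact memLp_top_of_bound (hf.comp hY).aestronglyMeasurable C (ae_of_all _ fun ω => hC _)

section ConditionalExpectation

variable {Ω : Type*} {m m0 : MeasurableSpace Ω} {P : Measure Ω} [IsFiniteMeasure P]

theorem integral_mul_eq_of_condExp_ae_eq (hm : m ≤ m0) {f g h : Ω → ℝ}
    (hf : StronglyMeasurable[m] f) (hfg : Integrable (f * g) P) (hg : Integrable g P)
    (hgh : P[g|m] =ᵐ[P] h) :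
    ∫ ω, f ω * g ω ∂P = ∫ ω, f ω * h ω ∂P :=
  calc ∫ ω, f ω * g ω ∂P = ∫ ω, P[f * g|m] ω ∂P := (integral_condExp hm).symm
    _ = ∫ ω, f ω * h ω ∂P := integral_congr_ae <|
        (condExp_mul_of_stronglyMeasurable_left hf hfg hg).trans
          (hgh.mono fun ω hω => by simp [hω])

theorem condExp_sub_mul_ae_eq_zero (hm : m ≤ m0) {a g c : Ω → ℝ}
    (ha : StronglyMeasurable[m] a) (hc : StronglyMeasurable[m] c) (hc_top : MemLp c ∞ P)
    (hg : Integrable g P) (hga : P[g|m] =ᵐ[P] a) :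
    P[fun ω => (a ω - g ω) * c ω|m] =ᵐ[P] 0 := by
  have ha_int : Integrable a P := integrable_condExp.congr hga
  have hag : Integrable (a - g) P := ha_int.sub hg
  show P[(a - g) * c|m] =ᵐ[P] 0
  filter_upwards [condExp_mul_of_stronglyMeasurable_right hc (hag.mul_of_top_left hc_top) hag,
    condExp_sub ha_int hg m, hga] with ω h_mul h_sub h_ga
  rw [h_mul, Pi.mul_apply, h_sub, Pi.sub_apply, h_ga, condExp_of_stronglyMeasurable hm ha ha_int]
  simp

theorem integral_sub_mul_sq_eq (hm : m ≤ m0) {a b g c : Ω → ℝ}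
    (ha : StronglyMeasurable[m] a) (hc : StronglyMeasurable[m] c)
    (ha_top : MemLp a ∞ P) (hc_top : MemLp c ∞ P) (hg_top : MemLp g ∞ P)
    (hga : P[g|m] =ᵐ[P] a) (hgb : P[fun ω => g ω ^ 2|m] =ᵐ[P] b) :
    ∫ ω, ((a ω - g ω) * c ω) ^ 2 ∂P = ∫ ω, c ω ^ 2 * (b ω - a ω ^ 2) ∂P := by
  have hc2 : MemLp (fun ω => c ω ^ 2) ∞ P := by simpa only [sq, Pi.mul_def] using hc_top.mul hc_top
  have hc2a : MemLp (fun ω => c ω ^ 2 * a ω) ∞ P := ha_top.mul hc2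
  have hc2aa : MemLp (fun ω => c ω ^ 2 * a ω * a ω) ∞ P := ha_top.mul hc2a
  have hg2 : MemLp (fun ω => g ω ^ 2) ∞ P := by simpa only [sq, Pi.mul_def] using hg_top.mul hg_top
  have int_top {f : Ω → ℝ} (hf : MemLp f ∞ P) : Integrable f P := hf.integrable le_top
  have hcag : Integrable (fun ω => c ω ^ 2 * a ω * g ω) P := int_top (hg_top.mul hc2a)
  have hcgg : Integrable (fun ω => c ω ^ 2 * g ω ^ 2) P := int_top (hg2.mul hc2)
  have h_cross : ∫ ω, c ω ^ 2 * a ω * g ω ∂P = ∫ ω, c ω ^ 2 * a ω * a ω ∂P :=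
    integral_mul_eq_of_condExp_ae_eq hm ((hc.pow 2).mul ha) hcag (int_top hg_top) hga
  have h_sq : ∫ ω, c ω ^ 2 * g ω ^ 2 ∂P = ∫ ω, c ω ^ 2 * b ω ∂P :=
    integral_mul_eq_of_condExp_ae_eq hm (hc.pow 2) hcgg (int_top hg2) hgb
  have hb : Integrable (fun ω => c ω ^ 2 * b ω) P :=
    (integrable_condExp.congr hgb).mul_of_top_right hc2
  calc ∫ ω, ((a ω - g ω) * c ω) ^ 2 ∂P
      = ∫ ω, c ω ^ 2 * a ω * a ω - 2 * (c ω ^ 2 * a ω * g ω) + c ω ^ 2 * g ω ^ 2 ∂P :=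
        integral_congr_ae (ae_of_all _ fun ω => by ring)
    _ = ∫ ω, c ω ^ 2 * a ω * a ω ∂P - 2 * ∫ ω, c ω ^ 2 * a ω * g ω ∂P
          + ∫ ω, c ω ^ 2 * g ω ^ 2 ∂P := by
        rw [integral_add ?_ hcgg, integral_sub (int_top hc2aa) (hcag.const_mul 2),
          integral_const_mul]
        exact (int_top hc2aa).sub (hcag.const_mul 2)
    _ = ∫ ω, c ω ^ 2 * b ω ∂P - ∫ ω, c ω ^ 2 * a ω * a ω ∂P := by
        rw [h_cross, h_sq]; ring
    _ = ∫ ω, c ω ^ 2 * (b ω - a ω ^ 2) ∂P := by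
        rw [← integral_sub hb (int_top hc2aa)]
        exact integral_congr_ae (ae_of_all _ fun ω => by ring)

theorem integral_sum_sq_eq_sum_integral_sq (ℱ : Filtration ℕ m0) {X : ℕ → Ω → ℝ} {T : ℕ}
    (hX : ∀ k, StronglyMeasurable[ℱ (k + 1)] (X k)) (hX2 : ∀ k, MemLp (X k) 2 P)
    (hX0 : ∀ k < T, P[X k|ℱ k] =ᵐ[P] 0) :
    ∫ ω, (∑ k ∈ Finset.range T, X k ω) ^ 2 ∂P = ∑ k ∈ Finset.range T, ∫ ω, X k ω ^ 2 ∂P := by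
  have hXX : ∀ k l, Integrable (fun ω => X k ω * X l ω) P :=
    fun k l => (hX2 k).integrable_mul (hX2 l)
  have horth : ∀ l k, l < k → k < T → ∫ ω, X l ω * X k ω ∂P = 0 := fun l k hlk hkT => by
    rw [integral_mul_eq_of_condExp_ae_eq (ℱ.le k) ((hX l).mono (ℱ.mono hlk)) (hXX l k)
      ((hX2 k).integrable one_le_two) (hX0 k hkT)]
    simp
  calc ∫ ω, (∑ k ∈ Finset.range T, X k ω) ^ 2 ∂P
      = ∫ ω, ∑ k ∈ Finset.range T, ∑ l ∈ Finset.range T, X k ω * X l ω ∂P := by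
        simp only [sq, Finset.sum_mul_sum]
    _ = ∑ k ∈ Finset.range T, ∑ l ∈ Finset.range T, ∫ ω, X k ω * X l ω ∂P := by
        rw [integral_finsetSum _ fun k _ => integrable_finsetSum _ fun l _ => hXX k l]
        exact Finset.sum_congr rfl fun k _ => integral_finsetSum _ fun l _ => hXX k l
    _ = ∑ k ∈ Finset.range T, ∫ ω, X k ω ^ 2 ∂P := by
        refine Finset.sum_congr rfl fun k hk => ?_
        rw [Finset.sum_eq_single_of_mem k hk fun l hl hlk => ?_]
        · simp only [sq]
        rcases hlk.lt_or_gt with hlk | hkl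
        · simpa only [mul_comm] using horth l k hlk (Finset.mem_range.mp hk)
        · exact horth k l hkl (Finset.mem_range.mp hl)

theorem integral_sq_average_sub_mul_le (ℱ : Filtration ℕ m0) {a b g c : ℕ → Ω → ℝ}
    {T : ℕ} {γ : ℝ}
    (ha : ∀ k, StronglyMeasurable[ℱ k] (a k)) (hc : ∀ k, StronglyMeasurable[ℱ k] (c k))
    (hg : ∀ k, StronglyMeasurable[ℱ (k + 1)] (g k))
    (ha_top : ∀ k, MemLp (a k) ∞ P) (hc_top : ∀ k, MemLp (c k) ∞ P)
    (hg_top : ∀ k, MemLp (g k) ∞ P)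
    (hga : ∀ k < T, P[g k|ℱ k] =ᵐ[P] a k)
    (hgb : ∀ k < T, P[fun ω => g k ω ^ 2|ℱ k] =ᵐ[P] b k)
    (hγ : ∀ k < T, ∫ ω, c k ω ^ 2 * (b k ω - a k ω ^ 2) ∂P ≤ γ) :
    ∫ ω, ((T : ℝ)⁻¹ * ∑ k ∈ Finset.range T, (a k ω - g k ω) * c k ω) ^ 2 ∂P ≤ γ / T := by
  set X : ℕ → Ω → ℝ := fun k ω => (a k ω - g k ω) * c k ω
  have hX : ∀ k, StronglyMeasurable[ℱ (k + 1)] (X k) := fun k =>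
    (((ha k).mono (ℱ.mono k.le_succ)).sub (hg k)).mul ((hc k).mono (ℱ.mono k.le_succ))
  have hX2 : ∀ k, MemLp (X k) 2 P := fun k =>
    ((hc_top k).mul ((ha_top k).sub (hg_top k))).mono_exponent le_top
  have hX0 : ∀ k < T, P[X k|ℱ k] =ᵐ[P] 0 := fun k hk =>
    condExp_sub_mul_ae_eq_zero (ℱ.le k) (ha k) (hc k) (hc_top k)
      ((hg_top k).integrable le_top) (hga k hk)
  calc ∫ ω, ((T : ℝ)⁻¹ * ∑ k ∈ Finset.range T, X k ω) ^ 2 ∂P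
      = (T : ℝ)⁻¹ ^ 2 * ∑ k ∈ Finset.range T, ∫ ω, X k ω ^ 2 ∂P := by
        simp only [mul_pow, integral_const_mul, integral_sum_sq_eq_sum_integral_sq ℱ hX hX2 hX0]
    _ ≤ (T : ℝ)⁻¹ ^ 2 * ∑ _k ∈ Finset.range T, γ := by
        gcongr with k hk
        exact (integral_sub_mul_sq_eq (ℱ.le k) (ha k) (hc k) (ha_top k) (hc_top k) (hg_top k)
          (hga k (Finset.mem_range.mp hk)) (hgb k (Finset.mem_range.mp hk))).trans_le
          (hγ k (Finset.mem_range.mp hk))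
    _ = γ / T := by
        rw [Finset.sum_const, Finset.card_range, nsmul_eq_mul]
        -- for `T = 0` both sides are `0`, since `(0 : ℝ)⁻¹ = 0`
        rcases T.eq_zero_or_pos with rfl | hT
        · simp
        · field_simp

theorem memLp_average_sub_mul {a g c : ℕ → Ω → ℝ} (T : ℕ) {p : ℝ≥0∞}
    (ha_top : ∀ k, MemLp (a k) ∞ P) (hc_top : ∀ k, MemLp (c k) ∞ P)
    (hg_top : ∀ k, MemLp (g k) ∞ P) :
    MemLp (fun ω => (T : ℝ)⁻¹ * ∑ k ∈ Finset.range T, (a k ω - g k ω) * c k ω) p P :=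
  ((memLp_finsetSum _ fun k _ => (hc_top k).mul ((ha_top k).sub (hg_top k))).const_mul
    _).mono_exponent le_top

end ConditionalExpectation

section Trajectory

variable {Ω M : Type*} {m0 : MeasurableSpace Ω} [mM : MeasurableSpace M] {Z : ℕ → Ω → M}

def trajectoryFiltration (hZ : ∀ k, Measurable (Z k)) : Filtration ℕ m0 where
  seq k := ⨆ i ∈ Finset.range (k + 1), MeasurableSpace.comap (Z i) mM
  mono' _ _ hlk := biSup_mono fun _ hi => Finset.range_subset_range.mpr (by omega) hi
  le' _ := iSup₂_le fun i _ => (hZ i).comap_le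

theorem stronglyMeasurable_comp_trajectoryFiltration (hZ : ∀ k, Measurable (Z k))
    {f : M → ℝ} (hf : Measurable f) {l k : ℕ} (hlk : l ≤ k) :
    StronglyMeasurable[trajectoryFiltration hZ k] fun ω => f (Z l ω) := by
  refine (hf.comp (measurable_iff_comap_le.mpr ?_)).stronglyMeasurable
  exact le_iSup₂ (f := fun i (_ : i ∈ Finset.range (k + 1)) => MeasurableSpace.comap (Z i) mM)
    l (Finset.mem_range.mpr (Nat.lt_succ_of_le hlk))

end Trajectory

theorem stmt_14_general {M : Type*} [mM : MeasurableSpace M]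
    (κ : Kernel M M) [IsMarkovKernel κ] (N : ℕ)
    (ψ : Fin N → M → ℝ)
    (hψ_meas : ∀ i, Measurable (ψ i))
    (hψ_bdd : ∀ i, ∃ C : ℝ, ∀ x, |ψ i x| ≤ C)
    (Kψ Kψ2 : Fin N → M → ℝ)
    (hKψ : ∀ i x, Kψ i x = ∫ y, ψ i y ∂(κ x))
    {Ω : Type*} [MeasurableSpace Ω] (P : Measure Ω) [IsProbabilityMeasure P]
    (T : ℕ) (Z : ℕ → Ω → M) (hZ_meas : ∀ k, Measurable (Z k))
    (F : ℕ → MeasurableSpace Ω)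
    (hF : ∀ k, F k = ⨆ i ∈ Finset.range (k + 1), MeasurableSpace.comap (Z i) mM)
    (hcond₁ : ∀ i, ∀ k < T,
      P[(fun ω => ψ i (Z (k + 1) ω)) | F k] =ᵐ[P] fun ω => Kψ i (Z k ω))
    (hcond₂ : ∀ i, ∀ k < T,
      P[(fun ω => (ψ i (Z (k + 1) ω)) ^ 2) | F k] =ᵐ[P] fun ω => Kψ2 i (Z k ω))
    (γ' : ℝ)
    (hbound : ∀ i j : Fin N, ∀ k < T,
      (∫ ω, ψ j (Z k ω) ^ 2 * (Kψ2 i (Z k ω) - (Kψ i (Z k ω)) ^ 2) ∂P) ≤ γ')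
    (Khat KT : Ω → Matrix (Fin N) (Fin N) ℝ)
    (hKhat : ∀ ω i j, Khat ω i j
      = (T : ℝ)⁻¹ * ∑ k ∈ Finset.range T, ψ i (Z (k + 1) ω) * ψ j (Z k ω))
    (hKT : ∀ ω i j, KT ω i j
      = (T : ℝ)⁻¹ * ∑ k ∈ Finset.range T, Kψ i (Z k ω) * ψ j (Z k ω)) :
    (∫ ω, frobeniusNormSq (KT ω - Khat ω) ∂P) ≤ (N : ℝ) ^ 2 * γ' / T := by
  obtain rfl : F = trajectoryFiltration hZ_meas := funext hF
  have hKψ_meas : ∀ i, Measurable (Kψ i) := fun i => by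
    rw [funext (hKψ i)]
    exact (hψ_meas i).stronglyMeasurable.integral_kernel.measurable
  have hKψ_bdd : ∀ i, ∃ C : ℝ, ∀ x, |Kψ i x| ≤ C := fun i => by
    obtain ⟨C, hC⟩ := hψ_bdd i
    exact ⟨C, fun x => hKψ i x ▸ abs_integral_le_of_forall_abs_le hC⟩
  have hψ_top i k := memLp_top_comp_of_bound (P := P) (hψ_meas i) (hψ_bdd i) (hZ_meas k)
  have hKψ_top i k := memLp_top_comp_of_bound (P := P) (hKψ_meas i) (hKψ_bdd i) (hZ_meas k)
  have hentry : ∀ ω i j, (KT ω - Khat ω) i j = (T : ℝ)⁻¹ *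
      ∑ k ∈ Finset.range T, (Kψ i (Z k ω) - ψ i (Z (k + 1) ω)) * ψ j (Z k ω) := by
    intro ω i j
    simp only [Matrix.sub_apply, hKT, hKhat, ← mul_sub, ← Finset.sum_sub_distrib, sub_mul]
  calc _ ≤ Fintype.card (Fin N) * Fintype.card (Fin N) * (γ' / T) := by
        refine integral_frobeniusNormSq_le (fun i j => ?_) (fun i j => ?_) <;>
          simp only [hentry]
        · exact memLp_average_sub_mul T (hKψ_top i) (hψ_top j) (fun k => hψ_top i (k + 1))
        · exact integral_sq_average_sub_mul_le _
            (fun k => stronglyMeasurable_comp_trajectoryFiltration hZ_meas (hKψ_meas i) le_rfl)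
            (fun k => stronglyMeasurable_comp_trajectoryFiltration hZ_meas (hψ_meas j) le_rfl)
            (fun k => stronglyMeasurable_comp_trajectoryFiltration hZ_meas (hψ_meas i) le_rfl)
            (hKψ_top i) (hψ_top j) (fun k => hψ_top i (k + 1)) (hcond₁ i) (hcond₂ i) (hbound i j)
    _ = (N : ℝ) ^ 2 * γ' / T := by simp only [Fintype.card_fin]; ring

/-- equation 2.18 of Proposition 2.8, Markov-chain case. For data from
a single trajectory of a Markov chain with transition kernel `κ`, the mean-square
Frobenius distance between the data-driven matrix `K̂_T` and the Koopman stiffness matrix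
`K_T` is bounded by `N² γ̃ / T`. -/
theorem stmt_14 {M : Type*} [mM : MeasurableSpace M]
    (κ : Kernel M M) [IsMarkovKernel κ] (N : ℕ)
    (ψ : Fin N → M → ℝ)
    (hψ_meas : ∀ i, Measurable (ψ i))
    (hψ_bdd : ∀ i, ∃ C : ℝ, ∀ x, |ψ i x| ≤ C)
    (Kψ Kψ2 : Fin N → M → ℝ)
    (hKψ : ∀ i x, Kψ i x = ∫ y, ψ i y ∂(κ x))
    (hKψ2 : ∀ i x, Kψ2 i x = ∫ y, (ψ i y) ^ 2 ∂(κ x))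
    {Ω : Type*} [MeasurableSpace Ω] (P : Measure Ω) [IsProbabilityMeasure P]
    (T : ℕ) (hT : 0 < T) (Z : ℕ → Ω → M) (hZ_meas : ∀ k, Measurable (Z k))
    (F : ℕ → MeasurableSpace Ω)
    (hF : ∀ k, F k = ⨆ i ∈ Finset.range (k + 1), MeasurableSpace.comap (Z i) mM)
    (hcond₁ : ∀ i, ∀ k < T,
      P[(fun ω => ψ i (Z (k + 1) ω)) | F k] =ᵐ[P] fun ω => Kψ i (Z k ω))
    (hcond₂ : ∀ i, ∀ k < T,
      P[(fun ω => (ψ i (Z (k + 1) ω)) ^ 2) | F k] =ᵐ[P] fun ω => Kψ2 i (Z k ω))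
    (γ' : ℝ) (hγ' : 0 ≤ γ')
    (hbound : ∀ i j : Fin N, ∀ k < T,
      (∫ ω, ψ j (Z k ω) ^ 2 * (Kψ2 i (Z k ω) - (Kψ i (Z k ω)) ^ 2) ∂P) ≤ γ')
    (Khat KT : Ω → Matrix (Fin N) (Fin N) ℝ)
    (hKhat : ∀ ω i j, Khat ω i j
      = (T : ℝ)⁻¹ * ∑ k ∈ Finset.range T, ψ i (Z (k + 1) ω) * ψ j (Z k ω))
    (hKT : ∀ ω i j, KT ω i j
      = (T : ℝ)⁻¹ * ∑ k ∈ Finset.range T, Kψ i (Z k ω) * ψ j (Z k ω)) :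
    (∫ ω, frobeniusNormSq (KT ω - Khat ω) ∂P) ≤ (N : ℝ) ^ 2 * γ' / T :=
  stmt_14_general (mM := mM) κ N ψ hψ_meas hψ_bdd Kψ Kψ2 hKψ P T Z hZ_meas F hF hcond₁ hcond₂ γ'
    hbound Khat KT hKhat hKT
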